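/- Let J, R, Q, R_c be real n×n matrices with J skew-symmetric, K a real m×n matrix, B a real n×m matrix, and set A_K = (J − R)Q − BK and C_K = −(Kᵀ BᵀQ + Qᵀ B K). Suppose Q_c is a real symmetric positive definite n×n matrix solving the algebraic Riccati equation A_KᵀQ_c + Q_c A_K + 2 Q_c R_c Q_c + C_K = 0, and define the observer gain L = Q_c⁻¹ Kᵀ and the controller dynamics matrix A_c = A_K − L BᵀQ. Then Q_c A_c + A_cᵀ Q_c = −2 Q_c R_c Q_c; moreover, if R_c is symmetric, then setting J_c = ½(A_c Q_c⁻¹ − Q_c⁻¹ A_cᵀ), the matrix J_c is skew-symmetric and A_c = (J_c − R_c) Q_c, i.e., the observer-based state-feedback controller admits a port-Hamiltonian realization with interconnection matrix J_c, dissipation matrix R_c, and energy matrix Q_c. -/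
import Mathlib


open Matrix

/-- Port-Hamiltonian realization of the OBSF controller: if `Q_c > 0` solves the Riccati
equation `A_KᵀQ_c + Q_cA_K + 2Q_cR_cQ_c + C_K = 0` and `L = Q_c⁻¹Kᵀ`,
`A_c = A_K − LBᵀQ`, then `Q_cA_c + A_cᵀQ_c = −2Q_cR_cQ_c`, and for symmetric `R_c` the
matrix `J_c = ½(A_cQ_c⁻¹ − Q_c⁻¹A_cᵀ)` is skew-symmetric with `A_c = (J_c − R_c)Q_c`. -/
theorem obsf_controller_port_hamiltonian_realization
    (n m : ℕ) (J R Q Rc : Matrix (Fin n) (Fin n) ℝ)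
    (K : Matrix (Fin m) (Fin n) ℝ) (B : Matrix (Fin n) (Fin m) ℝ)
    (hJ : Jᵀ = -J)
    (Qc : Matrix (Fin n) (Fin n) ℝ) (hQcsymm : Qcᵀ = Qc) (hQc : Qc.PosDef)
    (AK CK : Matrix (Fin n) (Fin n) ℝ)
    (hAK : AK = (J - R) * Q - B * K)
    (hCK : CK = -(Kᵀ * Bᵀ * Q + Qᵀ * B * K))
    (hARE : AKᵀ * Qc + Qc * AK + (2 : ℝ) • (Qc * Rc * Qc) + CK = 0)
    (L : Matrix (Fin n) (Fin m) ℝ) (hL : L = Qc⁻¹ * Kᵀ)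
    (Ac : Matrix (Fin n) (Fin n) ℝ) (hAc : Ac = AK - L * (Bᵀ * Q)) :
    Qc * Ac + Acᵀ * Qc = -((2 : ℝ) • (Qc * Rc * Qc)) ∧
    (Rcᵀ = Rc →
      ∀ Jc : Matrix (Fin n) (Fin n) ℝ,
        Jc = (1 / 2 : ℝ) • (Ac * Qc⁻¹ - Qc⁻¹ * Acᵀ) →
        Jcᵀ = -Jc ∧ Ac = (Jc - Rc) * Qc) := by
  have hdet : IsUnit Qc.det := isUnit_iff_ne_zero.mpr (ne_of_gt hQc.det_pos)
  have hmul : Qc * Qc⁻¹ = 1 := Matrix.mul_nonsing_inv Qc hdet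
  have hmul' : Qc⁻¹ * Qc = 1 := Matrix.nonsing_inv_mul Qc hdet
  have hinvsymm : Qc⁻¹ᵀ = Qc⁻¹ := by
    rw [Matrix.transpose_nonsing_inv, hQcsymm]
  have h1 : Qc * Ac = Qc * AK - Kᵀ * Bᵀ * Q := by
    rw [hAc, hL]
    simp only [Matrix.mul_sub, ← Matrix.mul_assoc, hmul, Matrix.one_mul]
  have h2 : Acᵀ * Qc = AKᵀ * Qc - Qᵀ * B * K := by
    rw [hAc, hL]
    simp only [Matrix.transpose_sub, Matrix.sub_mul, Matrix.transpose_mul,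
      Matrix.transpose_transpose, hinvsymm, ← Matrix.mul_assoc]
    rw [Matrix.mul_assoc (Qᵀ * B * K), hmul', Matrix.mul_one]
  have hmain : Qc * Ac + Acᵀ * Qc = -((2 : ℝ) • (Qc * Rc * Qc)) := by
    have h := hARE
    rw [hCK] at h
    rw [h1, h2]
    linear_combination (norm := noncomm_ring) h
  refine ⟨hmain, fun hRc Jc hJc => ?_⟩
  constructor
  · rw [hJc, Matrix.transpose_smul, Matrix.transpose_sub, Matrix.transpose_mul,
      Matrix.transpose_mul, hinvsymm, Matrix.transpose_transpose, ← smul_neg]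
    congr 1
    abel
  · have hAcT : Acᵀ * Qc = -((2 : ℝ) • (Qc * Rc * Qc)) - Qc * Ac := by
      linear_combination (norm := noncomm_ring) hmain
    have hJcQc : Jc * Qc = Ac + Rc * Qc := by
      rw [hJc, Matrix.smul_mul, Matrix.sub_mul, Matrix.mul_assoc Ac, hmul',
        Matrix.mul_one, Matrix.mul_assoc, hAcT]
      simp only [Matrix.mul_sub, Matrix.mul_neg, Matrix.mul_smul, ← Matrix.mul_assoc,
        hmul', Matrix.one_mul]
      module
    rw [Matrix.sub_mul, hJcQc]
    abel
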